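/- Let f:[a,b]→ℝ₊ be a nonnegative convex function, n a positive integer, h=(b−a)/n, x_k = a+k·h. Then (1/(b−a))∫_a^b f(u) du − (1/n)∑_{j=1}^{n} f((x_{j−1}+x_j)/2) − (1/n)∑_{j=1}^{n−1} f(x_j) ≤ (f(a)+f(b))/(2n). -/

import Mathlib

/-!
On each cell `[c, d]` of the partition the right half of the Hermite–Hadamard inequality
holds, `∫_c^d f ≤ (d - c) (f c + f d) / 2`: pointwise `f u + f (c + d - u) ≤ f c + f d`, and the
reflection `u ↦ c + d - u` preserves the integral. Summing over the cells bounds the mean of `f`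
by the composite trapezoid value `(f a + f b) / (2n) + (1/n) ∑_{j=1}^{n-1} f (x_j)`. The midpoint
sum is nonnegative because `f` is, so subtracting it keeps the bound.
-/

open MeasureTheory Finset

theorem ConvexOn.map_add_map_swap_le {𝕜 E β : Type*} [Semiring 𝕜] [PartialOrder 𝕜]
    [AddCommMonoid E] [AddCommMonoid β] [PartialOrder β] [IsOrderedAddMonoid β]
    [SMul 𝕜 E] [Module 𝕜 β] {s : Set E} {f : E → β} (hf : ConvexOn 𝕜 s f)
    {x y : E} (hx : x ∈ s) (hy : y ∈ s) {a b : 𝕜} (ha : 0 ≤ a) (hb : 0 ≤ b) (hab : a + b = 1) :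
    f (a • x + b • y) + f (b • x + a • y) ≤ f x + f y :=
  calc f (a • x + b • y) + f (b • x + a • y)
      ≤ (a • f x + b • f y) + (b • f x + a • f y) :=
        add_le_add (hf.2 hx hy ha hb hab) (hf.2 hx hy hb ha ((add_comm b a).trans hab))
    _ = f x + f y := by
        rw [add_add_add_comm, ← add_smul, ← add_smul, add_comm b a, hab, one_smul, one_smul]

theorem Finset.sum_range_add_succ {M : Type*} [AddCommMonoid M] (g : ℕ → M) {n : ℕ} (hn : 0 < n) :
    ∑ k ∈ range n, (g k + g (k + 1)) = g 0 + g n + 2 • ∑ k ∈ Ico 1 n, g k := by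
  have hshift : ∑ k ∈ range n, g (k + 1) = ∑ k ∈ Ico 1 n, g k + g n := by
    rw [← sum_Ico_succ_top hn, sum_Ico_eq_sum_range, Nat.add_sub_cancel]
    simp only [add_comm 1]
  rw [sum_add_distrib, sum_range_eq_add_Ico g hn, hshift, two_nsmul]
  abel

namespace ConvexOn

variable {s : Set ℝ} {f : ℝ → ℝ} {c d u : ℝ}

theorem map_add_map_reflect_le (hf : ConvexOn ℝ s f) (hc : c ∈ s) (hd : d ∈ s)
    (hu : u ∈ Set.Icc c d) : f u + f (c + d - u) ≤ f c + f d := by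
  rw [← segment_eq_Icc (hu.1.trans hu.2)] at hu
  obtain ⟨a, b, ha, hb, hab, rfl⟩ := hu
  have hreflect : c + d - (a • c + b • d) = b • c + a • d := by
    simp only [smul_eq_mul]; linear_combination (-(c + d)) * hab
  rw [hreflect]
  exact hf.map_add_map_swap_le hc hd ha hb hab

theorem abs_le_of_mem_Icc (hf : ConvexOn ℝ (Set.Icc c d) f) (hu : u ∈ Set.Icc c d) :
    |f u| ≤ |max (f c) (f d)| + 2 * |f ((c + d) / 2)| := by
  have hcd : c ≤ d := hu.1.trans hu.2
  have hu' : c + d - u ∈ Set.Icc c d := ⟨by linarith [hu.2], by linarith [hu.1]⟩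
  have hupper : ∀ v ∈ Set.Icc c d, f v ≤ max (f c) (f d) := fun v hv =>
    hf.le_on_segment (Set.left_mem_Icc.2 hcd) (Set.right_mem_Icc.2 hcd)
      (by rwa [segment_eq_Icc hcd])
  have hmid : f ((c + d) / 2) ≤ (f u + f (c + d - u)) / 2 := by
    have := hf.2 hu hu' (by norm_num : (0 : ℝ) ≤ 1 / 2) (by norm_num : (0 : ℝ) ≤ 1 / 2)
      (by norm_num)
    simp only [smul_eq_mul] at this
    rw [show 1 / 2 * u + 1 / 2 * (c + d - u) = (c + d) / 2 by ring] at this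
    linarith
  rw [abs_le]
  constructor <;> linarith [hupper u hu, hupper _ hu', le_abs_self (max (f c) (f d)),
    neg_abs_le (max (f c) (f d)), le_abs_self (f ((c + d) / 2)), neg_abs_le (f ((c + d) / 2))]

theorem integrableOn_Icc (hf : ConvexOn ℝ (Set.Icc c d) f) : IntegrableOn f (Set.Icc c d) := by
  have hmeas : AEStronglyMeasurable f (volume.restrict (Set.Icc c d)) := by
    rw [Measure.restrict_congr_set Ioo_ae_eq_Icc.symm]
    have hcont := hf.continuousOn_interior
    rw [interior_Icc] at hcont
    exact hcont.aestronglyMeasurable measurableSet_Ioo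
  exact IntegrableOn.of_bound measure_Icc_lt_top hmeas _
    ((ae_restrict_iff' measurableSet_Icc).2 (ae_of_all _ fun u hu => hf.abs_le_of_mem_Icc hu))

theorem intervalIntegrable (hf : ConvexOn ℝ (Set.Icc c d) f) (hcd : c ≤ d) :
    IntervalIntegrable f volume c d :=
  (intervalIntegrable_iff_integrableOn_Icc_of_le hcd).2 hf.integrableOn_Icc

theorem integral_le_trapezoid (hf : ConvexOn ℝ (Set.Icc c d) f) (hcd : c ≤ d) :
    ∫ u in c..d, f u ≤ (d - c) * (f c + f d) / 2 := by
  have hint := hf.intervalIntegrable hcd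
  have hint_reflect : IntervalIntegrable (fun u => f (c + d - u)) volume c d := by
    simpa using (hint.comp_sub_left (c + d)).symm
  have hreflect : ∫ u in c..d, f (c + d - u) = ∫ u in c..d, f u := by
    simp [intervalIntegral.integral_comp_sub_left]
  have hsum : ∫ u in c..d, (f u + f (c + d - u)) ≤ ∫ _ in c..d, (f c + f d) :=
    intervalIntegral.integral_mono_on hcd (hint.add hint_reflect) intervalIntegrable_const
      fun u hu => hf.map_add_map_reflect_le (Set.left_mem_Icc.2 hcd) (Set.right_mem_Icc.2 hcd) hu
  rw [intervalIntegral.integral_add hint hint_reflect, hreflect,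
    intervalIntegral.integral_const, smul_eq_mul] at hsum
  linarith

theorem integral_le_sum_trapezoid {x : ℕ → ℝ} (hx : Monotone x) {n : ℕ}
    (hf : ConvexOn ℝ (Set.Icc (x 0) (x n)) f) :
    ∫ u in x 0..x n, f u ≤ ∑ k ∈ range n, (x (k + 1) - x k) * (f (x k) + f (x (k + 1))) / 2 := by
  have hsub : ∀ k < n, ConvexOn ℝ (Set.Icc (x k) (x (k + 1))) f := fun k hk =>
    hf.subset (Set.Icc_subset_Icc (hx k.zero_le) (hx hk)) (convex_Icc _ _)
  rw [← intervalIntegral.sum_integral_adjacent_intervals fun k hk =>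
    (hsub k hk).intervalIntegrable (hx k.le_succ)]
  exact sum_le_sum fun k hk => (hsub k (mem_range.1 hk)).integral_le_trapezoid (hx k.le_succ)

theorem integral_le_uniform_trapezoid {a b : ℝ} (hab : a ≤ b)
    (hf : ConvexOn ℝ (Set.Icc a b) f) {n : ℕ} (hn : 0 < n) :
    ∫ u in a..b, f u
      ≤ (b - a) / n * ((f a + f b) / 2 + ∑ k ∈ Ico 1 n, f (a + k * ((b - a) / n))) := by
  set h := (b - a) / n with hh
  set x : ℕ → ℝ := fun k => a + k * h with hx
  have hh0 : 0 ≤ h := div_nonneg (sub_nonneg.2 hab) n.cast_nonneg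
  have hx_mono : Monotone x := fun i j hij => by simp only [hx]; gcongr
  have hx0 : x 0 = a := by simp [hx]
  have hxn : x n = b := by simp only [hx, hh]; field_simp; ring
  have hstep : ∀ k, x (k + 1) - x k = h := fun k => by simp only [hx]; push_cast; ring
  have key :=
    (show ConvexOn ℝ (Set.Icc (x 0) (x n)) f by rwa [hx0, hxn]).integral_le_sum_trapezoid hx_mono
  rw [hx0, hxn] at key
  calc ∫ u in a..b, f u ≤ _ := key
    _ = h / 2 * ∑ k ∈ range n, (f (x k) + f (x (k + 1))) := by
        rw [mul_sum]; exact sum_congr rfl fun k _ => by rw [hstep]; ring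
    _ = h * ((f a + f b) / 2 + ∑ k ∈ Ico 1 n, f (x k)) := by
        rw [sum_range_add_succ (fun k => f (x k)) hn, hx0, hxn, nsmul_eq_mul]; ring

end ConvexOn

theorem add_mul_div_mem_Icc {a b t m : ℝ} (hab : a ≤ b) (ht : 0 ≤ t) (htm : t ≤ m) :
    a + t * ((b - a) / m) ∈ Set.Icc a b := by
  have hba : 0 ≤ b - a := sub_nonneg.2 hab
  rw [show t * ((b - a) / m) = t / m * (b - a) by ring]
  refine ⟨le_add_of_nonneg_right (mul_nonneg (div_nonneg ht (ht.trans htm)) hba), ?_⟩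
  have : t / m * (b - a) ≤ 1 * (b - a) :=
    mul_le_mul_of_nonneg_right (div_le_one_of_le₀ htm (ht.trans htm)) hba
  linarith

theorem ostrowski_convex_combined
    (a b : ℝ) (hab : a < b) (f : ℝ → ℝ)
    (hf : ConvexOn ℝ (Set.Icc a b) f)
    (hpos : ∀ t ∈ Set.Icc a b, 0 ≤ f t)
    (n : ℕ) (hn : 1 ≤ n)
    (h : ℝ) (hh : h = (b - a) / n)
    (x : ℕ → ℝ) (hx : ∀ k, x k = a + k * h) :
    (1 / (b - a)) * (∫ u in a..b, f u)
      - (1 / n) * ∑ k ∈ Finset.range n, f ((x k + x (k + 1)) / 2)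
      - (1 / n) * ∑ k ∈ Finset.Ico 1 n, f (x k)
      ≤ (f a + f b) / (2 * n) := by
  obtain rfl : x = fun k : ℕ => a + k * h := funext hx
  subst hh
  beta_reduce
  have hmid :
      0 ≤ ∑ k ∈ range n, f ((a + k * ((b - a) / n) + (a + (k + 1 : ℕ) * ((b - a) / n))) / 2) := by
    refine sum_nonneg fun k hk => hpos _ ?_
    have hk : (k + 1 : ℝ) ≤ n := by exact_mod_cast mem_range.1 hk
    convert add_mul_div_mem_Icc hab.le (t := k + 1 / 2) (m := n) (by positivity) (by linarith)
      using 1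
    push_cast; ring
  have hba : b - a ≠ 0 := (sub_pos.2 hab).ne'
  set T := ∑ k ∈ Ico 1 n, f (a + k * ((b - a) / n))
  have hmean : 1 / (b - a) * ∫ u in a..b, f u ≤ (f a + f b) / (2 * n) + 1 / n * T :=
    calc 1 / (b - a) * ∫ u in a..b, f u
        ≤ 1 / (b - a) * ((b - a) / n * ((f a + f b) / 2 + T)) := by
          gcongr; exact hf.integral_le_uniform_trapezoid hab.le hn
      _ = (f a + f b) / (2 * n) + 1 / n * T := by field_simp
  linarith [mul_nonneg (one_div_nonneg.2 (Nat.cast_nonneg n : (0 : ℝ) ≤ n)) hmid]
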